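/- Let β̃, ρ_F, γ, ν, S_F > 0, set μ = 1 + 2 β̃ ρ_F γ / ν (so μ > 1), and define on (0,∞) the function V^∞(s) = C₁ s^{−(1+μ)} exp( − (μ−1) S_F / s ) for any constant C₁ > 0. Then V^∞ satisfies, for every s > 0, the stationary Fokker–Planck equation d/ds [ β̃ ρ_F γ (S_F − s) V^∞(s) ] = (ν/2) d²/ds² ( s² V^∞(s) ); equivalently, the zero-flux relation (ν/2) d/ds ( s² V^∞(s) ) = β̃ ρ_F γ (S_F − s) V^∞(s) holds. -/

import Mathlib

open Real Set

/-! The stationary density is the zero-flux solution: `V = C z^p e^{c/z}` has logarithmic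
derivative `p/z - c/z²`, so `(z² V)' = ((p + 2) z - c) V`, which for `p = -(1 + μ)` and
`c = -(μ - 1) S_F` is `(μ - 1)(S_F - z) V`, while `(ν/2)(μ - 1) = β̃ρ_Fγ`. Differentiating the
zero-flux relation, which holds on the open half-line, gives the stationary Fokker–Planck
equation. -/

theorem hasDerivAt_const_mul_rpow_mul_exp_div (C p c : ℝ) {z : ℝ} (hz : 0 < z) :
    HasDerivAt (fun w : ℝ => C * w ^ p * exp (c / w))
      (C * z ^ p * exp (c / z) * (p / z - c / z ^ 2)) z := by
  have hexp : HasDerivAt (fun w : ℝ => exp (c / w)) (exp (c / z) * (c * -(z ^ 2)⁻¹)) z := by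
    simpa only [div_eq_mul_inv] using ((hasDerivAt_inv hz.ne').const_mul c).exp
  have hpow := (hasDerivAt_rpow_const (p := p) (Or.inl hz.ne')).const_mul C
  refine (hpow.mul hexp).congr_deriv ?_
  rw [rpow_sub_one hz.ne']
  field_simp
  ring

theorem hasDerivAt_sq_mul_const_mul_rpow_mul_exp_div (C p c : ℝ) {z : ℝ} (hz : 0 < z) :
    HasDerivAt (fun w : ℝ => w ^ 2 * (C * w ^ p * exp (c / w)))
      (((p + 2) * z - c) * (C * z ^ p * exp (c / z))) z := by
  have hV := hasDerivAt_const_mul_rpow_mul_exp_div C p c hz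
  refine ((hasDerivAt_pow 2 z).mul hV).congr_deriv ?_
  field_simp
  ring

theorem deriv_eq_const_mul_deriv_deriv_of_eqOn {U : Set ℝ} (hU : IsOpen U) {F J : ℝ → ℝ}
    {k s : ℝ} (hJ : EqOn (fun z => k * deriv F z) J U) (hs : s ∈ U) :
    deriv J s = k * deriv (deriv F) s := by
  rw [← (hJ.eventuallyEq_of_mem (hU.mem_nhds hs)).deriv_eq, deriv_const_mul_field]

theorem invGamma_zero_flux (βt ρF γ ν SF C₁ μ : ℝ) (hν : ν ≠ 0)
    (hμ : μ = 1 + 2 * βt * ρF * γ / ν) {s : ℝ} (hs : 0 < s) :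
    (ν / 2) * deriv (fun z : ℝ =>
        z ^ 2 * (C₁ * z ^ (-(1 + μ)) * exp (-(μ - 1) * SF / z))) s
      = βt * ρF * γ * (SF - s) * (C₁ * s ^ (-(1 + μ)) * exp (-(μ - 1) * SF / s)) := by
  rw [(hasDerivAt_sq_mul_const_mul_rpow_mul_exp_div C₁ _ _ hs).deriv, hμ]
  field_simp
  ring

theorem stmt_14_general (βt ρF γ ν SF C₁ : ℝ)
    (hν : 0 < ν) (μ : ℝ) (hμ : μ = 1 + 2 * βt * ρF * γ / ν) :
    ∀ s : ℝ, 0 < s →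
      (deriv (fun z : ℝ =>
          βt * ρF * γ * (SF - z) *
            (C₁ * z ^ (-(1 + μ)) * Real.exp (-(μ - 1) * SF / z))) s
        = (ν / 2) *
            deriv (deriv (fun z : ℝ =>
              z ^ 2 * (C₁ * z ^ (-(1 + μ)) * Real.exp (-(μ - 1) * SF / z)))) s)
      ∧ ((ν / 2) *
            deriv (fun z : ℝ =>
              z ^ 2 * (C₁ * z ^ (-(1 + μ)) * Real.exp (-(μ - 1) * SF / z))) s
          = βt * ρF * γ * (SF - s) *
              (C₁ * s ^ (-(1 + μ)) * Real.exp (-(μ - 1) * SF / s))) := by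
  have hflux := fun z (hz : z ∈ Ioi (0 : ℝ)) =>
    invGamma_zero_flux βt ρF γ ν SF C₁ μ hν.ne' hμ (mem_Ioi.mp hz)
  exact fun s hs => ⟨deriv_eq_const_mul_deriv_deriv_of_eqOn isOpen_Ioi hflux hs, hflux s hs⟩

/-- The inverse-gamma-type density V^∞(s) = C₁ s^{−(1+μ)} e^{−(μ−1)S_F/s}, with
μ = 1 + 2β̃ρ_Fγ/ν, satisfies the stationary Fokker–Planck equation
d/ds[β̃ρ_Fγ(S_F−s)V^∞] = (ν/2)d²/ds²(s²V^∞), equivalently the zero-flux relation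
(ν/2)d/ds(s²V^∞) = β̃ρ_Fγ(S_F−s)V^∞, for all s > 0. -/
theorem stmt_14 (βt ρF γ ν SF C₁ : ℝ)
    (hβ : 0 < βt) (hρF : 0 < ρF) (hγ : 0 < γ) (hν : 0 < ν) (hSF : 0 < SF)
    (hC₁ : 0 < C₁) (μ : ℝ) (hμ : μ = 1 + 2 * βt * ρF * γ / ν) :
    ∀ s : ℝ, 0 < s →
      (deriv (fun z : ℝ =>
          βt * ρF * γ * (SF - z) *
            (C₁ * z ^ (-(1 + μ)) * Real.exp (-(μ - 1) * SF / z))) s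
        = (ν / 2) *
            deriv (deriv (fun z : ℝ =>
              z ^ 2 * (C₁ * z ^ (-(1 + μ)) * Real.exp (-(μ - 1) * SF / z)))) s)
      ∧ ((ν / 2) *
            deriv (fun z : ℝ =>
              z ^ 2 * (C₁ * z ^ (-(1 + μ)) * Real.exp (-(μ - 1) * SF / z))) s
          = βt * ρF * γ * (SF - s) *
              (C₁ * s ^ (-(1 + μ)) * Real.exp (-(μ - 1) * SF / s))) :=
  stmt_14_general βt ρF γ ν SF C₁ hν μ hμ
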